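/- The contrastive loss admits the second-order Taylor expansion around the prototype: as δ → 0, f(δ) − [ f(0) + (1/τ)⟨m − μ_s, δ⟩ + (1/(2τ²))( Σ_k w_k ⟨δ, μ_k⟩² − ⟨δ, m⟩² ) ] = o(‖δ‖²), where f(δ) = l(μ_s + δ) and m = Σ_k w_k μ_k. That is, the second-order term of the loss in the perturbation δ is the quadratic form δᵀ[ (1/(2τ²))( Σ_k w_k μ_k μ_kᵀ − m mᵀ ) ]δ. -/

import Mathlib

/-!
Put `x_k = ⟪δ, μ k⟫ / τ`. Factoring `Z` out of the partition function gives
`l (μ s + δ) - l (μ s) = log (∑ k, w k * exp (x k)) - x s`, the cumulant generating function of the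
softmax distribution `w` evaluated at `x`. Up to `o(‖x‖²)` this is mean plus half the variance
of `x` under `w`, which follows from `exp t = 1 + t + t²/2 + o(t²)` and
`log (1 + u) = u - u²/2 + o(u²)`. The linear change of variables `δ ↦ x` preserves `o(‖·‖²)`.
-/

open scoped RealInnerProductSpace Topology
open Asymptotics Filter Real

namespace Real

lemma exp_sub_quadratic_isLittleO :
    (fun t : ℝ => exp t - (1 + t + t ^ 2 / 2)) =o[𝓝 0] fun t => t ^ 2 := by
  simpa [Finset.sum_range_succ, add_assoc] using exp_sub_sum_range_succ_isLittleO_pow 2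

lemma log_one_add_sub_quadratic_isLittleO :
    (fun t : ℝ => log (1 + t) - (t - t ^ 2 / 2)) =o[𝓝 0] fun t => t ^ 2 := by
  have hcomplex := (Complex.log_sub_logTaylor_isBigO 2).comp_tendsto
    (Complex.continuous_ofReal.tendsto' 0 0 rfl)
  refine IsBigO.trans_isLittleO ?_ (isLittleO_pow_pow (by norm_num : 2 < 3))
  rw [← isBigO_norm_norm]
  refine hcomplex.norm_norm.congr' ?_ (.of_forall fun t => by simp)
  filter_upwards [eventually_gt_nhds (show (-1 : ℝ) < 0 by norm_num)] with t ht
  have hlog : Complex.log (1 + t) = (log (1 + t) : ℝ) := by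
    rw [Complex.ofReal_log (by linarith)]
    push_cast
    rfl
  simp only [Function.comp_apply, Complex.logTaylor, Finset.sum_range_succ, hlog]
  rw [← Complex.norm_real]
  push_cast
  ring_nf

end Real

section

variable {K : Type*} [Fintype K]

lemma isBigO_sum_mul_comp_apply {f : ℝ → ℝ} {n : ℕ} (hf : f =O[𝓝 0] (· ^ n)) (w : K → ℝ) :
    (fun x : K → ℝ => ∑ k, w k * f (x k)) =O[𝓝 0] fun x => ‖x‖ ^ n :=
  IsBigO.fun_sum fun k _ => ((hf.comp_tendsto ((continuous_apply k).tendsto' 0 0 rfl)).trans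
    ((isBigO_of_le _ fun x => by simpa using norm_le_pi_norm x k).pow n)).const_mul_left (w k)

lemma isLittleO_sum_mul_comp_apply {f : ℝ → ℝ} {n : ℕ} (hf : f =o[𝓝 0] (· ^ n)) (w : K → ℝ) :
    (fun x : K → ℝ => ∑ k, w k * f (x k)) =o[𝓝 0] fun x => ‖x‖ ^ n :=
  IsLittleO.fun_sum fun k _ =>
    ((hf.comp_tendsto ((continuous_apply k).tendsto' 0 0 rfl)).trans_isBigO
      ((isBigO_of_le _ fun x => by simpa using norm_le_pi_norm x k).pow n)).const_mul_left (w k)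

theorem log_sum_mul_exp_sub_quadratic_isLittleO {w : K → ℝ} (hw : ∑ k, w k = 1) :
    (fun x : K → ℝ => log (∑ k, w k * exp (x k)) -
        (∑ k, w k * x k + ((∑ k, w k * x k ^ 2) - (∑ k, w k * x k) ^ 2) / 2))
      =o[𝓝 0] fun x => ‖x‖ ^ 2 := by
  set A : (K → ℝ) → ℝ := fun x => ∑ k, w k * (exp (x k) - 1)
  set L : (K → ℝ) → ℝ := fun x => ∑ k, w k * x k
  have hA : A =O[𝓝 0] fun x => ‖x‖ ^ 1 :=
    isBigO_sum_mul_comp_apply (f := fun t => exp t - 1)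
      (by simpa using exp_sub_sum_range_isBigO_pow 1) w
  have hL : L =O[𝓝 0] fun x => ‖x‖ ^ 1 :=
    isBigO_sum_mul_comp_apply (f := fun t => t)
      (by simpa using isBigO_refl (fun t : ℝ => t) (𝓝 0)) w
  have hAL : (fun x => A x - L x) =O[𝓝 0] fun x => ‖x‖ ^ 2 := by
    refine (isBigO_sum_mul_comp_apply (f := fun t => exp t - (1 + t))
      (by simpa [Finset.sum_range_succ] using exp_sub_sum_range_isBigO_pow 2) w).congr_left
        fun x => ?_
    simp only [A, L, ← Finset.sum_sub_distrib]
    ring_nf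
  have hsq : (fun x => A x ^ 2 - L x ^ 2) =o[𝓝 0] fun x => ‖x‖ ^ 2 :=
    ((hAL.mul (hA.add hL)).trans_isLittleO <|
      (isLittleO_norm_pow_norm_pow (by norm_num : 2 < 3)).congr_left fun x => by ring).congr_left
        fun x => by ring
  have hA0 : Tendsto A (𝓝 0) (𝓝 0) := hA.trans_tendsto (by simpa using tendsto_norm_zero)
  have hlog : (fun x => log (1 + A x) - (A x - A x ^ 2 / 2)) =o[𝓝 0] fun x => ‖x‖ ^ 2 :=
    (log_one_add_sub_quadratic_isLittleO.comp_tendsto hA0).trans_isBigO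
      (by simpa [Function.comp_def] using hA.pow 2)
  have hexp := isLittleO_sum_mul_comp_apply exp_sub_quadratic_isLittleO w
  -- With `Q = ∑ w x² / 2`, the error is `(log (1+A) - A + A²/2) + (A - L - Q) - (A² - L²)/2`.
  refine ((hlog.add hexp).sub (hsq.const_mul_left (1 / 2))).congr_left fun x => ?_
  have hsum : ∑ k, w k * exp (x k) = 1 + A x := by
    simp only [A, mul_sub, Finset.sum_sub_distrib, mul_one, hw]
    ring
  have hremainder : ∑ k, w k * (exp (x k) - (1 + x k + x k ^ 2 / 2))
      = A x - L x - (∑ k, w k * x k ^ 2) / 2 := by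
    simp only [A, L, Finset.sum_div, ← Finset.sum_sub_distrib]
    ring_nf
  rw [hsum, hremainder]
  ring

end

lemma isLittleO_comp_continuousLinearMap {E F : Type*} [NormedAddCommGroup E] [NormedSpace ℝ E]
    [NormedAddCommGroup F] [NormedSpace ℝ F] {f : F → ℝ} {n : ℕ}
    (hf : f =o[𝓝 0] fun y => ‖y‖ ^ n) (T : E →L[ℝ] F) :
    (fun x => f (T x)) =o[𝓝 0] fun x => ‖x‖ ^ n :=
  (hf.comp_tendsto (T.continuous.tendsto' 0 0 (map_zero T))).trans_isBigO
    ((T.isBigO_id _).norm_norm.pow n)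

theorem contrastive_loss_second_order_expansion_general
    {d : ℕ} {K : Type*} [Fintype K]
    (μ : K → EuclideanSpace ℝ (Fin d)) (s : K) (τ : ℝ)
    (l : EuclideanSpace ℝ (Fin d) → ℝ)
    (hl : ∀ z, l z =
      -Real.log (Real.exp (⟪z, μ s⟫ / τ) / ∑ k, Real.exp (⟪z, μ k⟫ / τ)))
    (Z : ℝ) (hZ : Z = ∑ k, Real.exp (⟪μ s, μ k⟫ / τ))
    (w : K → ℝ) (hw : ∀ k, w k = Real.exp (⟪μ s, μ k⟫ / τ) / Z)
    (m : EuclideanSpace ℝ (Fin d)) (hm : m = ∑ k, w k • μ k) :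
    (fun δ : EuclideanSpace ℝ (Fin d) =>
        l (μ s + δ)
          - (l (μ s + 0) + (1 / τ) * ⟪m - μ s, δ⟫
              + (1 / (2 * τ ^ 2)) * ((∑ k, w k * ⟪δ, μ k⟫ ^ 2) - ⟪δ, m⟫ ^ 2)))
      =o[𝓝 0] fun δ => ‖δ‖ ^ 2 := by
  have hS : ∀ z, 0 < ∑ k, exp (⟪z, μ k⟫ / τ) := fun z =>
    Finset.sum_pos (fun k _ => exp_pos _) ⟨s, Finset.mem_univ s⟩
  have hZ0 : 0 < Z := hZ ▸ hS (μ s)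
  have hw1 : ∑ k, w k = 1 := by
    simp only [hw, ← Finset.sum_div, ← hZ, div_self hZ0.ne']
  have hl' : ∀ z, l z = log (∑ k, exp (⟪z, μ k⟫ / τ)) - ⟪z, μ s⟫ / τ := fun z => by
    rw [hl, log_div (exp_ne_zero _) (hS z).ne', log_exp, neg_sub]
  have hshift : ∀ δ, log (∑ k, w k * exp (⟪δ, μ k⟫ / τ)) =
      log (∑ k, exp (⟪μ s + δ, μ k⟫ / τ)) - log Z := fun δ => by
    rw [← log_div (hS _).ne' hZ0.ne', Finset.sum_div]
    simp only [hw, inner_add_left, add_div, exp_add, div_mul_eq_mul_div]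
  let T : EuclideanSpace ℝ (Fin d) →L[ℝ] K → ℝ :=
    ContinuousLinearMap.pi fun k => τ⁻¹ • innerSL ℝ (μ k)
  have hT : ∀ δ k, T δ k = ⟪δ, μ k⟫ / τ := fun δ k => by
    simp [T, real_inner_comm, div_eq_inv_mul]
  refine (isLittleO_comp_continuousLinearMap
    (log_sum_mul_exp_sub_quadratic_isLittleO hw1) T).congr_left fun δ => ?_
  have hmean : ∑ k, w k * (⟪δ, μ k⟫ / τ) = ⟪δ, m⟫ / τ := by
    simp only [hm, inner_sum, real_inner_smul_right, Finset.sum_div, mul_div_assoc]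
  have hsecond : ∑ k, w k * (⟪δ, μ k⟫ / τ) ^ 2 = (∑ k, w k * ⟪δ, μ k⟫ ^ 2) / τ ^ 2 := by
    simp only [Finset.sum_div, div_pow, mul_div_assoc]
  simp only [hT, hmean, hsecond, hshift, hl', add_zero, ← hZ]
  rw [inner_add_left, inner_sub_left, real_inner_comm m, real_inner_comm (μ s) δ]
  ring

/-- The contrastive loss admits the second-order Taylor expansion around the
prototype: as `δ → 0`,
`f(δ) − [f(0) + (1/τ)⟨m − μ_s, δ⟩ + (1/(2τ²))(Σ_k w_k ⟨δ, μ_k⟩² − ⟨δ, m⟩²)] = o(‖δ‖²)`,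
where `f(δ) = l(μ_s + δ)` and `m = Σ_k w_k μ_k`. -/
theorem contrastive_loss_second_order_expansion
    {d : ℕ} {K : Type*} [Fintype K]
    (μ : K → EuclideanSpace ℝ (Fin d)) (s : K) (τ : ℝ) (hτ : 0 < τ)
    (l : EuclideanSpace ℝ (Fin d) → ℝ)
    (hl : ∀ z, l z =
      -Real.log (Real.exp (⟪z, μ s⟫ / τ) / ∑ k, Real.exp (⟪z, μ k⟫ / τ)))
    (Z : ℝ) (hZ : Z = ∑ k, Real.exp (⟪μ s, μ k⟫ / τ))
    (w : K → ℝ) (hw : ∀ k, w k = Real.exp (⟪μ s, μ k⟫ / τ) / Z)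
    (m : EuclideanSpace ℝ (Fin d)) (hm : m = ∑ k, w k • μ k) :
    (fun δ : EuclideanSpace ℝ (Fin d) =>
        l (μ s + δ)
          - (l (μ s + 0) + (1 / τ) * ⟪m - μ s, δ⟫
              + (1 / (2 * τ ^ 2)) * ((∑ k, w k * ⟪δ, μ k⟫ ^ 2) - ⟪δ, m⟫ ^ 2)))
      =o[𝓝 0] fun δ => ‖δ‖ ^ 2 :=
  contrastive_loss_second_order_expansion_general μ s τ l hl Z hZ w hw m hm
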